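/- arXiv:1310.1648 — 7 statements merged into one kernel-verified Lean document; each statement's English description precedes it below -/
import Mathlib

section
/- Consider the closed distributed SIR system: μ a finite measure on W, β : W → ℝ measurable nonnegative, S₀ : W → ℝ nonnegative integrable with S(0) = ∫S₀dμ > 0, constants N > 0 and γ > 0, continuous nonnegative I : [0,∞) → ℝ, q with q(0)=0 and q'(t) = -I(t)/N, S(t,w) = S₀(w)e^{β(w)q(t)}, S(t) = ∫S(t,w)dμ, R'(t) = γI(t) with R(0) = 0, and S(t) + I(t) + R(t) = N for all t. Assume I(t) → 0 and S(t) → S_∞ as t → ∞, that ∫₀^∞ I(u)du < ∞, and that M_β(λ) = ∫(S₀(w)/S(0))e^{β(w)λ}dμ(w) is finite and continuous on (-∞,0]. Then the final epidemic size satisfies S_∞ = S(0)·M_β((S_∞ − N)/(Nγ)). -/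
/-!
Since `q' = -I/N` and `R' = γ I`, the quantity `R + Nγ q` is conserved, so `q = -R/(Nγ)`.
Conservation of the population and `I → 0` give `R → N - S_∞`, hence
`q → (S_∞ - N)/(Nγ) ≤ 0`. On the other hand `S(t) = S(0) M_β(q(t))` with `q(t) ≤ 0`, so continuity
of `M_β` on `(-∞, 0]` identifies `S_∞` with `S(0) M_β((S_∞ - N)/(Nγ))`.
-/

open MeasureTheory Filter Topology Set

theorem eq_of_hasDerivAt_eq_of_ge {E : Type*} [NormedAddCommGroup E] [NormedSpace ℝ E]
    {f g f' : ℝ → E} {a : ℝ} (hf : ∀ t ≥ a, HasDerivAt f (f' t) t)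
    (hg : ∀ t ≥ a, HasDerivAt g (f' t) t) (ha : f a = g a) {t : ℝ} (ht : a ≤ t) :
    f t = g t :=
  eq_of_has_deriv_right_eq (fun x hx => (hf x hx.1).hasDerivWithinAt)
    (fun x hx => (hg x hx.1).hasDerivWithinAt)
    (fun x hx => (hf x hx.1).continuousAt.continuousWithinAt)
    (fun x hx => (hg x hx.1).continuousAt.continuousWithinAt) ha t ⟨ht, le_rfl⟩

theorem antitoneOn_Ici_of_hasDerivAt_nonpos {f f' : ℝ → ℝ} {a : ℝ}
    (hf : ∀ t ≥ a, HasDerivAt f (f' t) t) (hf' : ∀ t ≥ a, f' t ≤ 0) :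
    AntitoneOn f (Ici a) := by
  refine antitoneOn_of_hasDerivWithinAt_nonpos (f' := f') (convex_Ici a)
    (fun x hx => (hf x hx).continuousAt.continuousWithinAt) (fun x hx => ?_) (fun x hx => ?_)
  all_goals rw [interior_Ici] at hx
  exacts [(hf x hx.le).hasDerivWithinAt, hf' x hx.le]

theorem integral_eq_mul_integral_div_mul {W : Type*} [MeasurableSpace W] {μ : Measure W}
    {f g : W → ℝ} (hf : ∫ w, f w ∂μ ≠ 0) :
    ∫ w, f w * g w ∂μ = (∫ w, f w ∂μ) * ∫ w, f w / (∫ w', f w' ∂μ) * g w ∂μ := by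
  simp_rw [div_mul_eq_mul_div, integral_div, mul_div_cancel₀ _ hf]

section ClosedSIR

variable {N γ : ℝ} {I q R : ℝ → ℝ}

theorem recovered_eq_neg_mul_transport (hN : N ≠ 0) (hq0 : q 0 = 0)
    (hq : ∀ t ≥ (0:ℝ), HasDerivAt q (-I t / N) t) (hR0 : R 0 = 0)
    (hR : ∀ t ≥ (0:ℝ), HasDerivAt R (γ * I t) t) {t : ℝ} (ht : 0 ≤ t) :
    R t = -(N * γ) * q t := by
  refine eq_of_hasDerivAt_eq_of_ge (g := fun s => -(N * γ) * q s) hR (fun s hs => ?_)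
    (by simp [hR0, hq0]) ht
  exact ((hq s hs).const_mul _).congr_deriv (by field_simp)

theorem transport_nonpos (hN : 0 < N) (hI : ∀ t ≥ (0:ℝ), 0 ≤ I t) (hq0 : q 0 = 0)
    (hq : ∀ t ≥ (0:ℝ), HasDerivAt q (-I t / N) t) {t : ℝ} (ht : 0 ≤ t) : q t ≤ 0 :=
  hq0 ▸ antitoneOn_Ici_of_hasDerivAt_nonpos hq
    (fun s hs => div_nonpos_of_nonpos_of_nonneg (neg_nonpos.2 (hI s hs)) hN.le)
    self_mem_Ici ht ht

theorem tendsto_transport_final_size {S : ℝ → ℝ} {Sinf : ℝ} (hN : N ≠ 0) (hγ : γ ≠ 0)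
    (hq0 : q 0 = 0) (hq : ∀ t ≥ (0:ℝ), HasDerivAt q (-I t / N) t) (hR0 : R 0 = 0)
    (hR : ∀ t ≥ (0:ℝ), HasDerivAt R (γ * I t) t) (hcons : ∀ t ≥ (0:ℝ), S t + I t + R t = N)
    (hIlim : Tendsto I atTop (𝓝 0)) (hSlim : Tendsto S atTop (𝓝 Sinf)) :
    Tendsto q atTop (𝓝 ((Sinf - N) / (N * γ))) := by
  have hlim := ((hSlim.add hIlim).sub_const N).div_const (N * γ)
  rw [add_zero] at hlim
  refine hlim.congr' ((eventually_ge_atTop 0).mono fun t ht => ?_)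
  have hRq := recovered_eq_neg_mul_transport hN hq0 hq hR0 hR ht
  rw [div_eq_iff (mul_ne_zero hN hγ)]
  linear_combination hcons t ht - hRq

end ClosedSIR

theorem closed_sir_final_size_general
    {W : Type*} [MeasurableSpace W]
    (μ : Measure W)
    (β : W → ℝ)
    (S₀ : W → ℝ)
    (hS0 : 0 < ∫ w, S₀ w ∂μ)
    (N γ : ℝ) (hN : 0 < N) (hγ : 0 < γ)
    (I : ℝ → ℝ)
    (hIpos : ∀ t ≥ (0:ℝ), 0 ≤ I t)
    (q : ℝ → ℝ) (hq0 : q 0 = 0)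
    (hq : ∀ t ≥ (0:ℝ), HasDerivAt q (-I t / N) t)
    (S : ℝ → ℝ) (hS : ∀ t, S t = ∫ w, S₀ w * Real.exp (β w * q t) ∂μ)
    (R : ℝ → ℝ) (hR0 : R 0 = 0)
    (hR : ∀ t ≥ (0:ℝ), HasDerivAt R (γ * I t) t)
    (hcons : ∀ t ≥ (0:ℝ), S t + I t + R t = N)
    (Sinf : ℝ)
    (hIlim : Tendsto I atTop (nhds 0))
    (hSlim : Tendsto S atTop (nhds Sinf))
    (M : ℝ → ℝ)
    (hM : ∀ lam : ℝ, M lam = ∫ w, (S₀ w / (∫ w', S₀ w' ∂μ)) * Real.exp (β w * lam) ∂μ)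
    (hMcont : ContinuousOn M (Set.Iic 0)) :
    Sinf = (∫ w, S₀ w ∂μ) * M ((Sinf - N) / (N * γ)) := by
  set qinf := (Sinf - N) / (N * γ)
  have hq_lim : Tendsto q atTop (𝓝 qinf) :=
    tendsto_transport_final_size hN.ne' hγ.ne' hq0 hq hR0 hR hcons hIlim hSlim
  have hq_nonpos : ∀ᶠ t in atTop, q t ∈ Iic 0 :=
    (eventually_ge_atTop 0).mono fun t ht => transport_nonpos hN hIpos hq0 hq ht
  have hqinf_nonpos : qinf ≤ 0 := le_of_tendsto hq_lim hq_nonpos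
  have hS_eq : S = fun t => (∫ w, S₀ w ∂μ) * M (q t) := by
    ext t
    rw [hS, hM, integral_eq_mul_integral_div_mul hS0.ne']
  have hS_lim : Tendsto S atTop (𝓝 ((∫ w, S₀ w ∂μ) * M qinf)) := by
    rw [hS_eq]
    exact ((hMcont qinf hqinf_nonpos).tendsto.comp
      (tendsto_nhdsWithin_iff.2 ⟨hq_lim, hq_nonpos⟩)).const_mul _
  exact tendsto_nhds_unique hSlim hS_lim

/-- Final epidemic size relation for the closed distributed SIR model:
`S_∞ = S(0)·M_β((S_∞ − N)/(Nγ))`. -/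
theorem closed_sir_final_size
    {W : Type*} [MeasurableSpace W]
    (μ : Measure W) [IsFiniteMeasure μ]
    (β : W → ℝ) (hβ : Measurable β) (hβpos : ∀ w, 0 ≤ β w)
    (S₀ : W → ℝ) (hS₀pos : ∀ w, 0 ≤ S₀ w) (hS₀int : Integrable S₀ μ)
    (hS0 : 0 < ∫ w, S₀ w ∂μ)
    (N γ : ℝ) (hN : 0 < N) (hγ : 0 < γ)
    (I : ℝ → ℝ) (hIcont : ContinuousOn I (Set.Ici 0))
    (hIpos : ∀ t ≥ (0:ℝ), 0 ≤ I t)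
    (q : ℝ → ℝ) (hq0 : q 0 = 0)
    (hq : ∀ t ≥ (0:ℝ), HasDerivAt q (-I t / N) t)
    (S : ℝ → ℝ) (hS : ∀ t, S t = ∫ w, S₀ w * Real.exp (β w * q t) ∂μ)
    (R : ℝ → ℝ) (hR0 : R 0 = 0)
    (hR : ∀ t ≥ (0:ℝ), HasDerivAt R (γ * I t) t)
    (hcons : ∀ t ≥ (0:ℝ), S t + I t + R t = N)
    (Sinf : ℝ)
    (hIlim : Tendsto I atTop (nhds 0))
    (hSlim : Tendsto S atTop (nhds Sinf))
    (hIint : IntegrableOn I (Set.Ici 0))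
    (M : ℝ → ℝ)
    (hM : ∀ lam : ℝ, M lam = ∫ w, (S₀ w / (∫ w', S₀ w' ∂μ)) * Real.exp (β w * lam) ∂μ)
    (hMfin : ∀ lam ≤ (0:ℝ), Integrable (fun w => S₀ w * Real.exp (β w * lam)) μ)
    (hMcont : ContinuousOn M (Set.Iic 0)) :
    Sinf = (∫ w, S₀ w ∂μ) * M ((Sinf - N) / (N * γ)) :=
  closed_sir_final_size_general μ β S₀ hS0 N γ hN hγ I hIpos q hq0 hq S hS R hR0 hR hcons Sinf hIlim
    hSlim M hM hMcont
end

section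
/- Let N > 0, γ > 0, S(0) > 0, let β̄ : [0,∞) → ℝ be monotonically nonincreasing and nonnegative, and let I : [0,∞) → ℝ be nonnegative with I and β̄·I integrable on [0,∞). Suppose S_∞ satisfies S_∞ = S(0)·exp(−(1/N)∫₀^∞ β̄(u)I(u)du) and ∫₀^∞ I(u)du = (N − S_∞)/γ. Then S_∞ ≥ S(0)·exp(−β̄(0)·(N − S_∞)/(Nγ)). -/
open MeasureTheory

/-- Worst-case-distribution conclusion of the Closed SIR Equivalence Lemma:
the undistributed (delta) model produces the smallest final susceptible
population among distributions with the same initial mean, i.e.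
`S_∞ ≥ S(0)·exp(−β̄(0)(N − S_∞)/(Nγ))`. -/
theorem worst_case_distribution_final_size
    (N γ S0 : ℝ) (hN : 0 < N) (hγ : 0 < γ) (hS0 : 0 < S0)
    (b I : ℝ → ℝ)
    (hbanti : AntitoneOn b (Set.Ici 0))
    (hbpos : ∀ t ≥ (0:ℝ), 0 ≤ b t)
    (hIpos : ∀ t ≥ (0:ℝ), 0 ≤ I t)
    (hIint : IntegrableOn I (Set.Ici 0))
    (hbIint : IntegrableOn (fun u => b u * I u) (Set.Ici 0))
    (Sinf : ℝ)
    (hSinf : Sinf = S0 * Real.exp (-(1 / N) * ∫ u in Set.Ici (0:ℝ), b u * I u))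
    (hItot : (∫ u in Set.Ici (0:ℝ), I u) = (N - Sinf) / γ) :
    Sinf ≥ S0 * Real.exp (-(b 0) * (N - Sinf) / (N * γ)) := by
  have hmono : (∫ u in Set.Ici (0:ℝ), b u * I u) ≤ ∫ u in Set.Ici (0:ℝ), b 0 * I u := by
    apply setIntegral_mono_on hbIint (hIint.const_mul _) measurableSet_Ici
    intro u hu
    exact mul_le_mul_of_nonneg_right (hbanti (le_refl (0:ℝ)) hu hu) (hIpos u hu)
  have h2 : (∫ u in Set.Ici (0:ℝ), b 0 * I u) = b 0 * ((N - Sinf) / γ) := by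
    rw [integral_const_mul, hItot]
  have hexp : -(b 0) * (N - Sinf) / (N * γ) ≤ -(1 / N) * ∫ u in Set.Ici (0:ℝ), b u * I u := by
    have : -(1 / N) * (b 0 * ((N - Sinf) / γ)) = -(b 0) * (N - Sinf) / (N * γ) := by
      field_simp
    rw [← this]
    apply mul_le_mul_of_nonpos_left _ (neg_nonpos.mpr (by positivity) : -(1/N) ≤ 0)
    rw [← h2]; exact hmono
  rw [ge_iff_le]
  nth_rewrite 2 [hSinf]
  exact mul_le_mul_of_nonneg_left (Real.exp_le_exp.mpr hexp) hS0.le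
end

section
/- Let Λ, m ∈ ℝ, β : W → ℝ, N₀ : W → ℝ, let N : ℝ → ℝ be positive, I : ℝ → ℝ continuous, and q : ℝ → ℝ differentiable with q(0) = 0 and q'(t) = −I(t)/N(t). If for each w ∈ W the function t ↦ S(t,w) is differentiable and satisfies S'(t,w) = Λ·N₀(w)·e^{(Λ−m)t} − β(w)·S(t,w)·I(t)/N(t) − m·S(t,w), then for all t and w: S(t,w) = (Λ·N₀(w)·∫₀ᵗ e^{Λr − β(w)q(r)} dr + S(0,w))·e^{β(w)q(t) − mt}. -/
/-! The equation is linear in `S`: with `φ = β q - m t` one has `φ' = -β I / N - m`, so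
`S' = Λ N₀ e^{(Λ - m) t} + φ' S`, hence `(S e^{-φ})' = Λ N₀ e^{Λ t - β q}`, and integrating from `0`
(where `φ = 0`) gives the formula. -/

open Real

section LinearODE

variable {y g φ φ' : ℝ → ℝ}

theorem hasDerivAt_mul_exp_neg_of_linear (hφ : ∀ t, HasDerivAt φ (φ' t) t)
    (hy : ∀ t, HasDerivAt y (g t + φ' t * y t) t) (t : ℝ) :
    HasDerivAt (fun τ => y τ * exp (-φ τ)) (g t * exp (-φ t)) t :=
  ((hy t).mul (hφ t).neg.exp).congr_deriv (by simp only [Pi.neg_apply]; ring)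

theorem mul_exp_neg_eq_add_integral_of_linear (hφ : ∀ t, HasDerivAt φ (φ' t) t)
    (hy : ∀ t, HasDerivAt y (g t + φ' t * y t) t) (hg : Continuous g) (t : ℝ) :
    y t * exp (-φ t) = y 0 * exp (-φ 0) + ∫ r in (0 : ℝ)..t, g r * exp (-φ r) := by
  have hφc : Continuous φ := continuous_iff_continuousAt.2 fun t => (hφ t).continuousAt
  rw [intervalIntegral.integral_eq_sub_of_hasDerivAt
    (fun τ _ => hasDerivAt_mul_exp_neg_of_linear hφ hy τ)
    ((hg.mul hφc.neg.rexp).intervalIntegrable 0 t)]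
  ring

theorem eq_integral_mul_exp_of_linear (hφ : ∀ t, HasDerivAt φ (φ' t) t)
    (hy : ∀ t, HasDerivAt y (g t + φ' t * y t) t) (hg : Continuous g) (t : ℝ) :
    y t = ((∫ r in (0 : ℝ)..t, g r * exp (-φ r)) + y 0 * exp (-φ 0)) * exp (φ t) := by
  rw [add_comm, ← mul_exp_neg_eq_add_integral_of_linear hφ hy hg, mul_assoc, ← exp_add,
    neg_add_cancel, exp_zero, mul_one]

end LinearODE

theorem open_sir_susceptible_solution_general
    {W : Type*}
    (Λ m : ℝ) (β N₀ : W → ℝ)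
    (N : ℝ → ℝ)
    (I : ℝ → ℝ)
    (q : ℝ → ℝ) (hq0 : q 0 = 0)
    (hq : ∀ t : ℝ, HasDerivAt q (-I t / N t) t)
    (S : ℝ → W → ℝ)
    (hS : ∀ w : W, ∀ t : ℝ,
      HasDerivAt (fun τ => S τ w)
        (Λ * N₀ w * Real.exp ((Λ - m) * t)
          - β w * S t w * I t / N t - m * S t w) t) :
    ∀ (t : ℝ) (w : W),
      S t w =
        (Λ * N₀ w * (∫ r in (0:ℝ)..t, Real.exp (Λ * r - β w * q r)) + S 0 w) *
          Real.exp (β w * q t - m * t) := by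
  intro t w
  have hφ : ∀ τ, HasDerivAt (fun τ => β w * q τ - m * τ) (β w * (-I τ / N τ) - m) τ :=
    fun τ => ((hq τ).const_mul (β w)).sub ((hasDerivAt_id τ).const_mul m |>.congr_deriv (mul_one m))
  have hSlin : ∀ τ, HasDerivAt (fun τ => S τ w)
      (Λ * N₀ w * exp ((Λ - m) * τ) + (β w * (-I τ / N τ) - m) * S τ w) τ :=
    fun τ => (hS w τ).congr_deriv (by ring)
  have hsol := eq_integral_mul_exp_of_linear hφ hSlin
    (continuous_const.mul ((continuous_const.mul continuous_id).rexp)) t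
  have hintegrand : ∀ r : ℝ, Λ * N₀ w * exp ((Λ - m) * r) * exp (-(β w * q r - m * r))
      = Λ * N₀ w * exp (Λ * r - β w * q r) := fun r => by
    rw [mul_assoc, ← exp_add]; ring_nf
  simpa only [hintegrand, intervalIntegral.integral_const_mul, hq0, mul_zero, sub_zero, neg_zero,
    exp_zero, mul_one] using hsol

/-- Integrating-factor solution of the susceptible equation in the open
('blue-sky' births) distributed SIR model:
`S(t,w) = (ΛN₀(w)∫₀ᵗ e^{Λr − β(w)q(r)}dr + S(0,w))·e^{β(w)q(t) − mt}`. -/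
theorem open_sir_susceptible_solution
    {W : Type*}
    (Λ m : ℝ) (β N₀ : W → ℝ)
    (N : ℝ → ℝ) (hNpos : ∀ t, 0 < N t)
    (I : ℝ → ℝ) (hI : Continuous I)
    (q : ℝ → ℝ) (hq0 : q 0 = 0)
    (hq : ∀ t : ℝ, HasDerivAt q (-I t / N t) t)
    (S : ℝ → W → ℝ)
    (hS : ∀ w : W, ∀ t : ℝ,
      HasDerivAt (fun τ => S τ w)
        (Λ * N₀ w * Real.exp ((Λ - m) * t)
          - β w * S t w * I t / N t - m * S t w) t) :
    ∀ (t : ℝ) (w : W),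
      S t w =
        (Λ * N₀ w * (∫ r in (0:ℝ)..t, Real.exp (Λ * r - β w * q r)) + S 0 w) *
          Real.exp (β w * q t - m * t) :=
  open_sir_susceptible_solution_general Λ m β N₀ N I q hq0 hq S hS
end

section
/- Consider the open distributed SIR model: μ a finite measure on W, β : W → ℝ bounded measurable, N₀ : W → ℝ nonnegative μ-integrable with ∫N₀dμ > 0, constants Λ > 0, m > 0, c ∈ (0,1], I : ℝ → ℝ continuous nonnegative with I(0) > 0, N(t) = (∫N₀dμ)e^{(Λ−m)t}, and S(t,w) differentiable in t satisfying S'(t,w) = Λ·N₀(w)e^{(Λ−m)t} − β(w)S(t,w)I(t)/N(t) − m·S(t,w) with proportional initial data S(0,w) = c·N₀(w). Assume t ↦ ∫S(t,·)dμ and t ↦ ∫βS(t,·)dμ are differentiable at 0 with derivatives ∫S'(0,·)dμ and ∫βS'(0,·)dμ respectively. Then β̄(t) = ∫β(w)S(t,w)dμ / ∫S(t,w)dμ is differentiable at t = 0 and β̄'(0) = −(I(0)/N(0))·(∫β²S(0,·)dμ/∫S(0,·)dμ − β̄(0)²) ≤ 0; i.e., the mean susceptibility is initially nonincreasing. -/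
/-!
At `t = 0` the birth term `Λ N₀ = (Λ / c) S(0,·)` is proportional to the susceptible density,
so births and deaths only rescale `S(0,·)` by the common rate `Λ / c - m` and leave the mean
`β̄` unchanged. What remains is the infection term `-(I(0)/N(0)) β S(0,·)`, which removes
mass preferentially where `β` is large; differentiating the quotient gives
`β̄'(0) = -(I(0)/N(0)) Var(β)`, where the variance is taken with respect to the weight
`S(0,·)` and is nonnegative by expanding `∫ (β - β̄(0))² S(0,·) dμ ≥ 0`.
-/

open MeasureTheory

theorem hasDerivAt_div_of_common_rate {f g : ℝ → ℝ} {x r k Q : ℝ}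
    (hf : HasDerivAt f (r * f x - k * Q) x) (hg : HasDerivAt g (r * g x - k * f x) x)
    (hgx : g x ≠ 0) :
    HasDerivAt (fun t => f t / g t) (-k * (Q / g x - (f x / g x) ^ 2)) x := by
  refine (hf.div hg hgx).congr_deriv ?_
  field_simp
  ring

theorem sq_integral_mul_div_le_integral_sq_mul_div {W : Type*} [MeasurableSpace W]
    {μ : Measure W} {f ρ : W → ℝ} (hρ : 0 ≤ᵐ[μ] ρ) (hρi : Integrable ρ μ)
    (hfρ : Integrable (fun w => f w * ρ w) μ) (hf2ρ : Integrable (fun w => f w ^ 2 * ρ w) μ) :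
    ((∫ w, f w * ρ w ∂μ) / ∫ w, ρ w ∂μ) ^ 2 ≤ (∫ w, f w ^ 2 * ρ w ∂μ) / ∫ w, ρ w ∂μ := by
  set A := ∫ w, ρ w ∂μ
  set B := ∫ w, f w * ρ w ∂μ
  set Q := ∫ w, f w ^ 2 * ρ w ∂μ
  have hA0 : 0 ≤ A := integral_nonneg_of_ae hρ
  rcases hA0.eq_or_lt with hA | hA
  · rw [← hA, div_zero, div_zero, zero_pow two_ne_zero]
  set a := B / A
  have hexpand : ∫ w, (f w - a) ^ 2 * ρ w ∂μ = Q - 2 * a * B + a ^ 2 * A := by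
    have hsplit : (fun w => (f w - a) ^ 2 * ρ w)
        = fun w => f w ^ 2 * ρ w - 2 * a * (f w * ρ w) + a ^ 2 * ρ w := by
      funext w; ring
    have hdiff : Integrable (fun w => f w ^ 2 * ρ w - 2 * a * (f w * ρ w)) μ :=
      hf2ρ.sub (hfρ.const_mul _)
    rw [hsplit, integral_add hdiff (hρi.const_mul _),
      integral_sub hf2ρ (hfρ.const_mul _), integral_const_mul, integral_const_mul]
  have hvar : 0 ≤ Q - 2 * a * B + a ^ 2 * A := by
    rw [← hexpand]
    exact integral_nonneg_of_ae (hρ.mono fun w hw => mul_nonneg (sq_nonneg _) hw)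
  rw [le_div_iff₀ hA]
  have hcancel : a ^ 2 * A = a * B := by simp only [a]; field_simp
  linarith

theorem open_sir_mean_susceptibility_initially_decreasing_general
    {W : Type*} [MeasurableSpace W]
    (μ : Measure W)
    (β : W → ℝ)
    (N₀ : W → ℝ) (hN₀pos : ∀ w, 0 ≤ N₀ w)
    (hN₀tot : 0 < ∫ w, N₀ w ∂μ)
    (Λ m : ℝ)
    (c : ℝ) (hc : c ∈ Set.Ioc (0:ℝ) 1)
    (I : ℝ → ℝ) (hI0 : 0 < I 0)
    (N : ℝ → ℝ) (hN : ∀ t, N t = (∫ w, N₀ w ∂μ) * Real.exp ((Λ - m) * t))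
    (S : ℝ → W → ℝ)
    (hS0 : ∀ w, S 0 w = c * N₀ w)
    (hSint : ∀ t, Integrable (fun w => S t w) μ)
    (hβSint : ∀ t, Integrable (fun w => β w * S t w) μ)
    (hβ2Sint : Integrable (fun w => (β w) ^ 2 * S 0 w) μ)
    (hD1 : HasDerivAt (fun t => ∫ w, S t w ∂μ)
      (∫ w, (Λ * N₀ w - β w * S 0 w * I 0 / N 0 - m * S 0 w) ∂μ) 0)
    (hD2 : HasDerivAt (fun t => ∫ w, β w * S t w ∂μ)
      (∫ w, β w * (Λ * N₀ w - β w * S 0 w * I 0 / N 0 - m * S 0 w) ∂μ) 0) :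
    HasDerivAt (fun t => (∫ w, β w * S t w ∂μ) / (∫ w, S t w ∂μ))
        (-(I 0 / N 0) *
          ((∫ w, (β w) ^ 2 * S 0 w ∂μ) / (∫ w, S 0 w ∂μ) -
            ((∫ w, β w * S 0 w ∂μ) / (∫ w, S 0 w ∂μ)) ^ 2)) 0 ∧
      -(I 0 / N 0) *
          ((∫ w, (β w) ^ 2 * S 0 w ∂μ) / (∫ w, S 0 w ∂μ) -
            ((∫ w, β w * S 0 w ∂μ) / (∫ w, S 0 w ∂μ)) ^ 2) ≤ 0 := by
  have hc0 : 0 < c := hc.1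
  set r := Λ / c - m
  set k := I 0 / N 0
  have hrate : ∀ w, Λ * N₀ w - β w * S 0 w * I 0 / N 0 - m * S 0 w
      = r * S 0 w - k * (β w * S 0 w) := fun w => by
    rw [hS0 w]; simp only [r, k]; field_simp; ring
  have hA : 0 < ∫ w, S 0 w ∂μ := by
    simp_rw [hS0, integral_const_mul]; positivity
  have hk : 0 ≤ k := div_nonneg hI0.le (by rw [hN]; positivity)
  have hg : HasDerivAt (fun t => ∫ w, S t w ∂μ)
      (r * ∫ w, S 0 w ∂μ - k * ∫ w, β w * S 0 w ∂μ) 0 := by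
    convert hD1 using 1
    simp_rw [hrate]
    rw [integral_sub ((hSint 0).const_mul r) ((hβSint 0).const_mul k), integral_const_mul,
      integral_const_mul]
  have hf : HasDerivAt (fun t => ∫ w, β w * S t w ∂μ)
      (r * ∫ w, β w * S 0 w ∂μ - k * ∫ w, β w ^ 2 * S 0 w ∂μ) 0 := by
    convert hD2 using 1
    have hβrate : ∀ w, β w * (Λ * N₀ w - β w * S 0 w * I 0 / N 0 - m * S 0 w)
        = r * (β w * S 0 w) - k * (β w ^ 2 * S 0 w) := fun w => by rw [hrate]; ring
    simp_rw [hβrate]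
    rw [integral_sub ((hβSint 0).const_mul r) (hβ2Sint.const_mul k), integral_const_mul,
      integral_const_mul]
  have hS0nonneg : 0 ≤ᵐ[μ] S 0 :=
    ae_of_all _ fun w => by rw [hS0 w]; exact mul_nonneg hc0.le (hN₀pos w)
  have hvar := sq_integral_mul_div_le_integral_sq_mul_div hS0nonneg (hSint 0) (hβSint 0) hβ2Sint
  exact ⟨hasDerivAt_div_of_common_rate hf hg hA.ne',
    neg_mul k _ ▸ neg_nonpos.mpr (mul_nonneg hk (sub_nonneg.mpr hvar))⟩

/-- In the open distributed SIR model with all births susceptible and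
proportional initial data, the mean susceptibility
`β̄(t) = ∫βS(t,·)dμ / ∫S(t,·)dμ` satisfies
`β̄'(0) = −(I(0)/N(0))·Var(β | S(0,·)) ≤ 0`. -/
theorem open_sir_mean_susceptibility_initially_decreasing
    {W : Type*} [MeasurableSpace W]
    (μ : Measure W) [IsFiniteMeasure μ]
    (β : W → ℝ) (hβmeas : Measurable β) (C : ℝ) (hβbdd : ∀ w, |β w| ≤ C)
    (N₀ : W → ℝ) (hN₀pos : ∀ w, 0 ≤ N₀ w) (hN₀int : Integrable N₀ μ)
    (hN₀tot : 0 < ∫ w, N₀ w ∂μ)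
    (Λ m : ℝ) (hΛ : 0 < Λ) (hm : 0 < m)
    (c : ℝ) (hc : c ∈ Set.Ioc (0:ℝ) 1)
    (I : ℝ → ℝ) (hIcont : Continuous I) (hIpos : ∀ t, 0 ≤ I t) (hI0 : 0 < I 0)
    (N : ℝ → ℝ) (hN : ∀ t, N t = (∫ w, N₀ w ∂μ) * Real.exp ((Λ - m) * t))
    (S : ℝ → W → ℝ)
    (hSderiv : ∀ w : W, ∀ t : ℝ,
      HasDerivAt (fun τ => S τ w)
        (Λ * N₀ w * Real.exp ((Λ - m) * t)
          - β w * S t w * I t / N t - m * S t w) t)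
    (hS0 : ∀ w, S 0 w = c * N₀ w)
    (hSint : ∀ t, Integrable (fun w => S t w) μ)
    (hβSint : ∀ t, Integrable (fun w => β w * S t w) μ)
    (hβ2Sint : Integrable (fun w => (β w) ^ 2 * S 0 w) μ)
    (hD1 : HasDerivAt (fun t => ∫ w, S t w ∂μ)
      (∫ w, (Λ * N₀ w - β w * S 0 w * I 0 / N 0 - m * S 0 w) ∂μ) 0)
    (hD2 : HasDerivAt (fun t => ∫ w, β w * S t w ∂μ)
      (∫ w, β w * (Λ * N₀ w - β w * S 0 w * I 0 / N 0 - m * S 0 w) ∂μ) 0) :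
    HasDerivAt (fun t => (∫ w, β w * S t w ∂μ) / (∫ w, S t w ∂μ))
        (-(I 0 / N 0) *
          ((∫ w, (β w) ^ 2 * S 0 w ∂μ) / (∫ w, S 0 w ∂μ) -
            ((∫ w, β w * S 0 w ∂μ) / (∫ w, S 0 w ∂μ)) ^ 2)) 0 ∧
      -(I 0 / N 0) *
          ((∫ w, (β w) ^ 2 * S 0 w ∂μ) / (∫ w, S 0 w ∂μ) -
            ((∫ w, β w * S 0 w ∂μ) / (∫ w, S 0 w ∂μ)) ^ 2) ≤ 0 :=
  open_sir_mean_susceptibility_initially_decreasing_general μ β N₀ hN₀pos hN₀tot Λ m c hc I hI0 N hN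
    S hS0 hSint hβSint hβ2Sint hD1 hD2
end

section
/- Let λ ∈ ℝ, K > 0, β : W → ℝ, let N : ℝ → ℝ be positive, I : ℝ → ℝ continuous, and let u, v : ℝ → ℝ be differentiable with u(0) = v(0) = 0, u'(t) = −λN(t)/K, and v'(t) = −I(t)/N(t). If for each w ∈ W the function t ↦ S(t,w) is differentiable and satisfies S'(t,w) = λ·S(t,w)·(1 − N(t)/K) − β(w)·S(t,w)·I(t)/N(t), then S(t,w) = S(0,w)·e^{λt + u(t) + β(w)v(t)} for all t and w. -/
/-! The equation is linear in `S(·,w)` with rate `λ + u' + β(w) v'`, the derivative of the exponent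
`λt + u(t) + β(w)v(t)`; so `S(t,w)·e^{-(λt + u(t) + β(w)v(t))}` has zero derivative and is constant. -/

open Real

theorem hasDerivAt_mul_exp_neg_eq_zero {f g g' : ℝ → ℝ} {t : ℝ}
    (hg : HasDerivAt g (g' t) t) (hf : HasDerivAt f (g' t * f t) t) :
    HasDerivAt (fun τ => f τ * exp (-g τ)) 0 t := by
  have hexp : HasDerivAt (fun τ => exp (-g τ)) (exp (-g t) * -g' t) t := hg.neg.exp
  exact (hf.mul hexp).congr_deriv (by ring)

theorem eq_mul_exp_of_hasDerivAt_eq_mul {f g g' : ℝ → ℝ}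
    (hg : ∀ t, HasDerivAt g (g' t) t) (hf : ∀ t, HasDerivAt f (g' t * f t) t) (t : ℝ) :
    f t = f 0 * exp (g t - g 0) := by
  have hconst := is_const_of_deriv_eq_zero
    (fun τ => (hasDerivAt_mul_exp_neg_eq_zero (hg τ) (hf τ)).differentiableAt)
    (fun τ => (hasDerivAt_mul_exp_neg_eq_zero (hg τ) (hf τ)).deriv) t 0
  calc f t = f t * exp (-g t) * exp (g t) := by
        rw [mul_assoc, ← exp_add, neg_add_cancel, exp_zero, mul_one]
    _ = f 0 * exp (-g 0) * exp (g t) := by rw [hconst]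
    _ = f 0 * exp (g t - g 0) := by rw [mul_assoc, ← exp_add, neg_add_eq_sub]

theorem sterilization_susceptible_solution_general
    {W : Type*}
    (lam K : ℝ) (β : W → ℝ)
    (N : ℝ → ℝ)
    (I : ℝ → ℝ)
    (u v : ℝ → ℝ) (hu0 : u 0 = 0) (hv0 : v 0 = 0)
    (hu : ∀ t : ℝ, HasDerivAt u (-(lam * N t / K)) t)
    (hv : ∀ t : ℝ, HasDerivAt v (-I t / N t) t)
    (S : ℝ → W → ℝ)
    (hS : ∀ w : W, ∀ t : ℝ,
      HasDerivAt (fun τ => S τ w)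
        (lam * S t w * (1 - N t / K) - β w * S t w * I t / N t) t) :
    ∀ (t : ℝ) (w : W),
      S t w = S 0 w * Real.exp (lam * t + u t + β w * v t) := by
  intro t w
  have hexponent : ∀ τ, HasDerivAt (fun τ => lam * τ + u τ + β w * v τ)
      (lam + -(lam * N τ / K) + β w * (-I τ / N τ)) τ := fun τ =>
    (((hasDerivAt_id τ).const_mul lam).add (hu τ)).add ((hv τ).const_mul (β w)) |>.congr_deriv
      (by ring)
  have hrate : ∀ τ, HasDerivAt (fun τ => S τ w)
      ((lam + -(lam * N τ / K) + β w * (-I τ / N τ)) * S τ w) τ := fun τ =>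
    (hS w τ).congr_deriv (by ring)
  simpa [hu0, hv0] using eq_mul_exp_of_hasDerivAt_eq_mul hexponent hrate t

/-- Solution of the susceptible equation in the sterilization model with two
transport variables: `S(t,w) = S(0,w)·e^{λt + u(t) + β(w)v(t)}`. -/
theorem sterilization_susceptible_solution
    {W : Type*}
    (lam K : ℝ) (hK : 0 < K) (β : W → ℝ)
    (N : ℝ → ℝ) (hNpos : ∀ t, 0 < N t)
    (I : ℝ → ℝ) (hI : Continuous I)
    (u v : ℝ → ℝ) (hu0 : u 0 = 0) (hv0 : v 0 = 0)
    (hu : ∀ t : ℝ, HasDerivAt u (-(lam * N t / K)) t)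
    (hv : ∀ t : ℝ, HasDerivAt v (-I t / N t) t)
    (S : ℝ → W → ℝ)
    (hS : ∀ w : W, ∀ t : ℝ,
      HasDerivAt (fun τ => S τ w)
        (lam * S t w * (1 - N t / K) - β w * S t w * I t / N t) t) :
    ∀ (t : ℝ) (w : W),
      S t w = S 0 w * Real.exp (lam * t + u t + β w * v t) :=
  sterilization_susceptible_solution_general lam K β N I u v hu0 hv0 hu hv S hS
end

section
/- Let λ > 0, γ > 0, and β ∈ ℝ with β > λ + γ. Define n* = γ/(β−λ), s* = γ²/(β−λ)², i* = λγ(β−λ−γ)/(β(β−λ)²), and r* = γ(β−λ−γ)/(β(β−λ)). Then n* ∈ (0,1), s* > 0, i* > 0, r* > 0, and (s*, i*, r*, n*) is an equilibrium of the rescaled undistributed sterilization system; that is: λ·s*·(1−n*) − β·s*·i*/n* = 0, β·s*·i*/n* − (γ + λn*)·i* = 0, γ·i* − λ·r*·n* = 0, and λ·s* − λ·(n*)² = 0. Moreover i* > 0 holds if and only if β > λ + γ, so this endemic equilibrium is biologically valid exactly when β − λ − γ > 0. -/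
/-!
Setting `n' = 0` forces `s = n²`; with `i ≠ 0`, `i' = 0` reads `βn = γ + λn`, so `n = γ/(β−λ)`;
then `s' = 0` gives `i = λn(1−n)/β` and `r' = 0` gives `r = γi/(λn) = γ(1−n)/β`.
All coordinates are positive exactly when `n < 1`, i.e. `β − λ > γ`.
-/

section

variable {lam γ β : ℝ}

lemma endemic_population_pos_lt_one (hγ : 0 < γ) (hβ : lam + γ < β) :
    0 < γ / (β - lam) ∧ γ / (β - lam) < 1 := by
  have hd : 0 < β - lam := by linarith
  exact ⟨div_pos hγ hd, (div_lt_one hd).2 (by linarith)⟩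

lemma endemic_infective_pos_iff (hlam : 0 < lam) (hγ : 0 < γ) (hβ : lam < β) :
    0 < lam * γ * (β - lam - γ) / (β * (β - lam) ^ 2) ↔ lam + γ < β := by
  have hd : 0 < β - lam := sub_pos.2 hβ
  have hβ₀ : 0 < β := by linarith
  rw [div_pos_iff_of_pos_right (by positivity), mul_pos_iff_of_pos_left (mul_pos hlam hγ),
    sub_pos, lt_sub_iff_add_lt']

lemma endemic_point_isEquilibrium (hβ : β ≠ 0) (hd : β - lam ≠ 0) :
    let n : ℝ := γ / (β - lam)
    let s : ℝ := γ ^ 2 / (β - lam) ^ 2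
    let i : ℝ := lam * γ * (β - lam - γ) / (β * (β - lam) ^ 2)
    let r : ℝ := γ * (β - lam - γ) / (β * (β - lam))
    lam * s * (1 - n) - β * s * i / n = 0 ∧
      β * s * i / n - (γ + lam * n) * i = 0 ∧
      γ * i - lam * r * n = 0 ∧
      lam * s - lam * n ^ 2 = 0 := by
  intro n s i r
  refine ⟨?_, ?_, ?_, ?_⟩ <;> simp only [n, s, i, r] <;> field_simp <;> ring

end

/-- The endemic equilibrium of the rescaled undistributed sterilization model:
for `β > λ + γ` the point
`(s*, i*, r*, n*) = (γ²/(β−λ)², λγ(β−λ−γ)/(β(β−λ)²), γ(β−λ−γ)/(β(β−λ)), γ/(β−λ))`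
is biologically valid and is an equilibrium; moreover `i* > 0 ↔ β > λ + γ`. -/
theorem sterilization_endemic_equilibrium
    (lam γ β : ℝ) (hlam : 0 < lam) (hγ : 0 < γ) (hβ : lam + γ < β) :
    let n : ℝ := γ / (β - lam)
    let s : ℝ := γ ^ 2 / (β - lam) ^ 2
    let i : ℝ := lam * γ * (β - lam - γ) / (β * (β - lam) ^ 2)
    let r : ℝ := γ * (β - lam - γ) / (β * (β - lam))
    (0 < n ∧ n < 1) ∧ 0 < s ∧ 0 < i ∧ 0 < r ∧
      lam * s * (1 - n) - β * s * i / n = 0 ∧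
      β * s * i / n - (γ + lam * n) * i = 0 ∧
      γ * i - lam * r * n = 0 ∧
      lam * s - lam * n ^ 2 = 0 ∧
      (0 < i ↔ lam + γ < β) := by
  intro n s i r
  have hd : 0 < β - lam := by linarith
  have hd' : 0 < β - lam - γ := by linarith
  have hβ₀ : 0 < β := by linarith
  have hi_iff : 0 < i ↔ lam + γ < β := endemic_infective_pos_iff hlam hγ (by linarith)
  have hs : 0 < s := by positivity
  have hr : 0 < r := by positivity
  obtain ⟨h_s, h_i, h_r, h_n⟩ := endemic_point_isEquilibrium hβ₀.ne' hd.ne'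
  exact ⟨endemic_population_pos_lt_one hγ hβ, hs, hi_iff.2 hβ, hr, h_s, h_i, h_r, h_n, hi_iff⟩
end

section
/- Let λ > 0 and γ > 0 be constants and b : [0,∞) → ℝ a continuous nonnegative function. Suppose s, i, r : [0,∞) → ℝ are differentiable, n(t) = s(t)+i(t)+r(t) > 0 for all t ≥ 0, and they satisfy s' = λs(1−n) − b·si/n, i' = b·si/n − (γ+λn)i, and r' = γi − λrn. If s(0) ≥ 0, i(0) ≥ 0, r(0) ≥ 0, and s(0)+i(0)+r(0) ≤ 1, then for all t ≥ 0: s(t) ≥ 0, i(t) ≥ 0, r(t) ≥ 0, and s(t)+i(t)+r(t) ≤ 1; in particular s(t)+i(t) ≤ 1 and n(t) ≤ 1, so the biologically valid region is positively invariant for the (nonautonomous) sterilization transport system. -/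
/-!
Each of `s`, `i`, `r` and `1 - n` satisfies a linear differential inequality `u' ≥ e(t) u` with
`e` continuous on `[0, ∞)`: `s'` and `i'` are multiples of `s` and `i`, `r' ≥ -λ n r` once
`i ≥ 0`, and `(1 - n)' = λ n² - λ s ≥ -λ n (1 - n)` once `i, r ≥ 0`. Grönwall's inequality for
the negative part `max (-u) 0`, whose right Dini derivative is at most `K · max (-u) 0` for a bound
`K` of `|e|` on `[0, t]`, shows that such a `u` stays nonnegative if `u 0 ≥ 0`. Applying this to
`s`, `i`, `r`, `1 - n` in turn gives the invariance.
-/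

open Filter Set Topology

theorem HasDerivAt.tendsto_slope_right {u : ℝ → ℝ} {u' x : ℝ} (hu : HasDerivAt u u' x) :
    Tendsto (fun z => (z - x)⁻¹ * (u z - u x)) (𝓝[>] x) (𝓝 u') := by
  refine ((hasDerivWithinAt_iff_tendsto_slope' (s := Ioi x) (lt_irrefl x)).1
    hu.hasDerivWithinAt).congr fun z => ?_
  rw [slope_def_module, smul_eq_mul]

theorem HasDerivAt.frequently_slope_posPart_lt {u : ℝ → ℝ} {u' x K ρ : ℝ}
    (hu : HasDerivAt u u' x) (hbound : 0 ≤ u x → u' ≤ K * u x) (hρ : K * max (u x) 0 < ρ) :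
    ∃ᶠ z in 𝓝[>] x, (z - x)⁻¹ * (max (u z) 0 - max (u x) 0) < ρ := by
  refine Eventually.frequently ?_
  rcases lt_trichotomy (u x) 0 with hneg | hzero | hpos
  · have hu_neg : ∀ᶠ z in 𝓝[>] x, u z < 0 :=
      mem_nhdsWithin_of_mem_nhds (hu.continuousAt.preimage_mem_nhds (Iio_mem_nhds hneg))
    have hρ0 : 0 < ρ := by rwa [max_eq_right hneg.le, mul_zero] at hρ
    filter_upwards [hu_neg] with z hz
    rwa [max_eq_right hz.le, max_eq_right hneg.le, sub_self, mul_zero]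
  · have hlim : Tendsto (fun z => max ((z - x)⁻¹ * (u z - u x)) 0) (𝓝[>] x) (𝓝 (max u' 0)) :=
      hu.tendsto_slope_right.max tendsto_const_nhds
    have hmax : max u' 0 < ρ := by
      have := hbound hzero.ge
      simp only [hzero, max_self, mul_zero] at this hρ ⊢
      exact max_lt (this.trans_lt hρ) hρ
    filter_upwards [(tendsto_order.1 hlim).2 ρ hmax, self_mem_nhdsWithin] with z hz hzx
    have hinv : 0 ≤ (z - x)⁻¹ := inv_nonneg.2 (sub_nonneg.2 (le_of_lt hzx))
    rw [hzero, max_self, sub_zero, mul_max_of_nonneg _ _ hinv, mul_zero]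
    rwa [hzero, sub_zero] at hz
  · have hu_pos : ∀ᶠ z in 𝓝[>] x, 0 < u z :=
      mem_nhdsWithin_of_mem_nhds (hu.continuousAt.preimage_mem_nhds (Ioi_mem_nhds hpos))
    have hlt : u' < ρ := (hbound hpos.le).trans_lt (by rwa [max_eq_left hpos.le] at hρ)
    filter_upwards [hu_pos, (tendsto_order.1 hu.tendsto_slope_right).2 ρ hlt] with z hz hslope
    rwa [max_eq_left hz.le, max_eq_left hpos.le]

theorem nonneg_of_hasDerivAt_ge_mul {u u' e : ℝ → ℝ} {a : ℝ}
    (hu : ∀ x ≥ a, HasDerivAt u (u' x) x) (he : ContinuousOn e (Ici a))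
    (hineq : ∀ x ≥ a, u x ≤ 0 → e x * u x ≤ u' x) (ha : 0 ≤ u a) :
    ∀ x ≥ a, 0 ≤ u x := by
  intro t ht
  obtain ⟨K, hK⟩ := (isCompact_Icc (a := a) (b := t)).exists_bound_of_continuousOn
    (he.mono fun x hx => hx.1)
  have hcont : ContinuousOn (fun x => max (-u x) 0) (Icc a t) := fun x hx =>
    (hu x hx.1).continuousAt.continuousWithinAt.neg.max continuousWithinAt_const
  have hslope : ∀ x ∈ Ico a t, 0 ≤ -u x → -u' x ≤ K * -u x := fun x hx hux => by
    have hex : e x ≤ K := (le_abs_self _).trans (by simpa using hK x (Ico_subset_Icc_self hx))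
    calc -u' x ≤ e x * -u x := by linarith [hineq x hx.1 (neg_nonneg.1 hux)]
      _ ≤ K * -u x := mul_le_mul_of_nonneg_right hex hux
  have hgronwall := le_gronwallBound_of_liminf_deriv_right_le (f := fun x => max (-u x) 0)
    (f' := fun x => K * max (-u x) 0) (δ := 0) (ε := 0) hcont
    (fun x hx ρ hρ => (hu x hx.1).neg.frequently_slope_posPart_lt (hslope x hx) hρ)
    (by simpa using ha) (fun x _ => (add_zero _).ge) t ⟨ht, le_rfl⟩
  rw [gronwallBound_ε0_δ0] at hgronwall
  simpa using hgronwall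

theorem sterilization_region_invariant_general
    (lam γ : ℝ) (hlam : 0 < lam) (hγ : 0 < γ)
    (b : ℝ → ℝ) (hbcont : Continuous b)
    (s i r : ℝ → ℝ)
    (hn : ∀ t ≥ (0:ℝ), 0 < s t + i t + r t)
    (hs : ∀ t ≥ (0:ℝ), HasDerivAt s
      (lam * s t * (1 - (s t + i t + r t))
        - b t * s t * i t / (s t + i t + r t)) t)
    (hi : ∀ t ≥ (0:ℝ), HasDerivAt i
      (b t * s t * i t / (s t + i t + r t)
        - (γ + lam * (s t + i t + r t)) * i t) t)
    (hr : ∀ t ≥ (0:ℝ), HasDerivAt r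
      (γ * i t - lam * r t * (s t + i t + r t)) t)
    (hs0 : 0 ≤ s 0) (hi0 : 0 ≤ i 0) (hr0 : 0 ≤ r 0)
    (hsum0 : s 0 + i 0 + r 0 ≤ 1) :
    ∀ t ≥ (0:ℝ),
      0 ≤ s t ∧ 0 ≤ i t ∧ 0 ≤ r t ∧ s t + i t + r t ≤ 1 ∧
        s t + i t ≤ 1 ∧ s t + i t + r t ≤ 1 := by
  have hcs : ContinuousOn s (Ici 0) := fun t ht => (hs t ht).continuousAt.continuousWithinAt
  have hci : ContinuousOn i (Ici 0) := fun t ht => (hi t ht).continuousAt.continuousWithinAt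
  have hcr : ContinuousOn r (Ici 0) := fun t ht => (hr t ht).continuousAt.continuousWithinAt
  have hs_nonneg : ∀ t ≥ (0:ℝ), 0 ≤ s t :=
    nonneg_of_hasDerivAt_ge_mul hs
      (e := fun t => lam * (1 - (s t + i t + r t)) - b t * i t / (s t + i t + r t))
      (by fun_prop (disch := exact fun t ht => (hn t ht).ne'))
      (fun t ht _ => le_of_eq (by field_simp [(hn t ht).ne'])) hs0
  have hi_nonneg : ∀ t ≥ (0:ℝ), 0 ≤ i t :=
    nonneg_of_hasDerivAt_ge_mul hi
      (e := fun t => b t * s t / (s t + i t + r t) - (γ + lam * (s t + i t + r t)))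
      (by fun_prop (disch := exact fun t ht => (hn t ht).ne'))
      (fun t ht _ => le_of_eq (by field_simp [(hn t ht).ne'])) hi0
  have hr_nonneg : ∀ t ≥ (0:ℝ), 0 ≤ r t :=
    nonneg_of_hasDerivAt_ge_mul hr (e := fun t => -(lam * (s t + i t + r t))) (by fun_prop)
      (fun t ht _ => by linarith [mul_nonneg hγ.le (hi_nonneg t ht)]) hr0
  have hn_le_one : ∀ t ≥ (0:ℝ), 0 ≤ 1 - (s t + i t + r t) :=
    nonneg_of_hasDerivAt_ge_mul
      (fun t ht => (((hs t ht).add (hi t ht)).add (hr t ht)).const_sub 1)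
      (e := fun t => -(lam * (s t + i t + r t))) (by fun_prop)
      (fun t ht _ => by
        linarith [mul_nonneg hlam.le (add_nonneg (hi_nonneg t ht) (hr_nonneg t ht))])
      (by linarith)
  intro t ht
  have hn_t := hn_le_one t ht
  exact ⟨hs_nonneg t ht, hi_nonneg t ht, hr_nonneg t ht, by linarith,
    by linarith [hr_nonneg t ht], by linarith⟩

/-- Positive invariance of the biologically valid region for the rescaled
(nonautonomous) sterilization transport system: if the proportions start with
`s, i, r ≥ 0` and `s + i + r ≤ 1`, they satisfy these bounds for all `t ≥ 0`;
in particular `s + i ≤ 1` and `n = s + i + r ≤ 1`. -/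
theorem sterilization_region_invariant
    (lam γ : ℝ) (hlam : 0 < lam) (hγ : 0 < γ)
    (b : ℝ → ℝ) (hbcont : Continuous b) (hbpos : ∀ t ≥ (0:ℝ), 0 ≤ b t)
    (s i r : ℝ → ℝ)
    (hn : ∀ t ≥ (0:ℝ), 0 < s t + i t + r t)
    (hs : ∀ t ≥ (0:ℝ), HasDerivAt s
      (lam * s t * (1 - (s t + i t + r t))
        - b t * s t * i t / (s t + i t + r t)) t)
    (hi : ∀ t ≥ (0:ℝ), HasDerivAt i
      (b t * s t * i t / (s t + i t + r t)
        - (γ + lam * (s t + i t + r t)) * i t) t)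
    (hr : ∀ t ≥ (0:ℝ), HasDerivAt r
      (γ * i t - lam * r t * (s t + i t + r t)) t)
    (hs0 : 0 ≤ s 0) (hi0 : 0 ≤ i 0) (hr0 : 0 ≤ r 0)
    (hsum0 : s 0 + i 0 + r 0 ≤ 1) :
    ∀ t ≥ (0:ℝ),
      0 ≤ s t ∧ 0 ≤ i t ∧ 0 ≤ r t ∧ s t + i t + r t ≤ 1 ∧
        s t + i t ≤ 1 ∧ s t + i t + r t ≤ 1 :=
  sterilization_region_invariant_general lam γ hlam hγ b hbcont s i r hn hs hi hr hs0 hi0 hr0 hsum0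
end
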